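/- For every situation Σ, ℱ↑ω(Σ) ≠ ∅ if and only if there exists a natural number n with ℱ↑n(Σ) ≠ ∅, and in that case ℱ↑ω(Σ) = ℱ↑n(Σ) for any such n. -/
import Mathlib


open scoped Classical

/-- The order on `P`, the set of total functions from situations (`Set S`) to
situations: `f₁ ≤ f₂` iff for every situation `Σ`, `f₁ Σ ≠ ∅ → f₁ Σ = f₂ Σ`. -/
def ple {S : Type*} (f₁ f₂ : Set S → Set S) : Prop :=
  ∀ Sig : Set S, f₁ Sig ≠ ∅ → f₁ Sig = f₂ Sig

/-- `f` is a least upper bound of `D ⊆ P` with respect to `ple`. -/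
def IsLubP {S : Type*} (D : Set (Set S → Set S)) (f : Set S → Set S) : Prop :=
  (∀ d ∈ D, ple d f) ∧ ∀ g : Set S → Set S, (∀ d ∈ D, ple d g) → ple f g

/-- `D ⊆ P` is directed: every finite subset of `D` has a least upper bound
that exists and belongs to `D`. -/
def DirectedP {S : Type*} (D : Set (Set S → Set S)) : Prop :=
  ∀ F : Set (Set S → Set S), F ⊆ D → F.Finite → ∃ f ∈ D, IsLubP F f

/-- The operator `ℱ_{g,T}` associated with a while loop whose test condition is
satisfied exactly by the states in `T` and whose body has effect `g`. -/
noncomputable def Fop {S : Type*} (T : Set S) (g : Set S → Set S)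
    (f : Set S → Set S) : Set S → Set S := fun Sig =>
  if Sig ∩ T = ∅ then Sig
  else if Sig ≠ ∅ ∧ Sig ⊆ T then f (g Sig)
  else ∅

/-- The powers of `ℱ`: `ℱ↑0 = f_∅` and `ℱ↑(n+1) = ℱ(ℱ↑n)`. -/
noncomputable def Fpow {S : Type*} (T : Set S) (g : Set S → Set S) :
    ℕ → (Set S → Set S)
  | 0 => fun _ => ∅
  | n + 1 => Fop T g (Fpow T g n)

lemma ple_trans {S : Type*} {f₁ f₂ f₃ : Set S → Set S} (h₁ : ple f₁ f₂)
    (h₂ : ple f₂ f₃) : ple f₁ f₃ := by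
  intro Sig hne
  rw [h₁ Sig hne]
  exact h₂ Sig (h₁ Sig hne ▸ hne)

lemma Fop_mono {S : Type*} (T : Set S) (g : Set S → Set S)
    {f₁ f₂ : Set S → Set S} (h : ple f₁ f₂) : ple (Fop T g f₁) (Fop T g f₂) := by
  intro Sig hne
  unfold Fop at *
  split_ifs at hne ⊢ with h1 h2
  · rfl
  · exact h (g Sig) hne
  · exact absurd rfl hne

lemma Fpow_chain {S : Type*} (T : Set S) (g : Set S → Set S) (n : ℕ) :
    ple (Fpow T g n) (Fpow T g (n + 1)) := by
  induction n with
  | zero => intro Sig hne; exact absurd rfl hne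
  | succ n ih => exact Fop_mono T g ih

lemma Fpow_le {S : Type*} (T : Set S) (g : Set S → Set S) {n m : ℕ}
    (h : n ≤ m) : ple (Fpow T g n) (Fpow T g m) := by
  induction h with
  | refl => intro Sig hne; rfl
  | step h ih => exact ple_trans ih (Fpow_chain T g _)

/-- `ℱ↑ω Σ ≠ ∅` iff there exists `n` with `ℱ↑n Σ ≠ ∅`, and in that case
`ℱ↑ω Σ = ℱ↑n Σ` for any such `n`. -/
theorem Fpow_omega_pointwise
 {S : Type*} (T : Set S) (g : Set S → Set S)
    (fω : Set S → Set S)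
    (hlub : IsLubP {f : Set S → Set S | ∃ n : ℕ, f = Fpow T g n} fω)
    (Sig : Set S) :
    (fω Sig ≠ ∅ ↔ ∃ n : ℕ, Fpow T g n Sig ≠ ∅) ∧
    ∀ n : ℕ, Fpow T g n Sig ≠ ∅ → fω Sig = Fpow T g n Sig := by
  have hub := hlub.1
  have hn : ∀ n, Fpow T g n Sig ≠ ∅ → Fpow T g n Sig = fω Sig := by
    intro n hne
    exact hub (Fpow T g n) ⟨n, rfl⟩ Sig hne
  constructor
  · constructor
    · intro hne
      by_contra hno
      push_neg at hno
      -- define h as the "omega" function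
      set h : Set S → Set S := fun Sg =>
        if hc : ∃ n, Fpow T g n Sg ≠ ∅ then Fpow T g hc.choose Sg else ∅ with hh
      have hupb : ∀ d ∈ {f : Set S → Set S | ∃ n : ℕ, f = Fpow T g n}, ple d h := by
        rintro d ⟨n, rfl⟩ Sg hne'
        have hc : ∃ m, Fpow T g m Sg ≠ ∅ := ⟨n, hne'⟩
        simp only [hh, dif_pos hc]
        rcases le_total n hc.choose with hle | hle
        · exact Fpow_le T g hle Sg hne'
        · exact (Fpow_le T g hle Sg hc.choose_spec).symm
      have := hlub.2 h hupb Sig hne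
      rw [this] at hne
      apply hne
      simp only [hh]
      rw [dif_neg]
      push_neg
      exact hno
    · rintro ⟨n, hne⟩
      rw [← hn n hne]; exact hne
  · intro n hne
    exact (hn n hne).symm
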